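/- Let m ≥ 1, let F_i, F_j ∈ ℝ^{m×2}, and set G_i = F_i F_iᵀ and G_j = F_j F_jᵀ. Then tr(G_i) + tr(G_j) − 2·tr( ( G_i^{1/2} G_j G_i^{1/2} )^{1/2} ) = inf over orthogonal Q ∈ O(2) of ‖F_j Q − F_i‖_F²; that is, the trace-based expression for the squared distance between Gram matrices coincides with the Procrustes-type expression min_{Q ∈ O(2)} ‖F_j Q − F_i‖_F². -/

import Mathlib

/-!
Put `S = G_i^{1/2}` and `C = F_jᵀ F_i`. Then `S G_j S = (S F_j)(F_jᵀ S)` while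
`(F_jᵀ S)(S F_j) = F_jᵀ G_i F_j = C Cᵀ`; since `AB` and `BA` have the same nonzero eigenvalues,
`tr (S G_j S)^{1/2} = tr (C Cᵀ)^{1/2}`, and for a `2 × 2` positive semidefinite matrix with
eigenvalues `λ, μ` one has `(√λ + √μ)² = tr + 2 √det`, so this trace is `√(tr CCᵀ + 2 |det C|)`.

On the other side `‖F_j Q - F_i‖² = tr G_i + tr G_j - 2 tr (Qᵀ C)`. Every `Q ∈ O(2)` is
`[[p, -εq], [q, εp]]` with `p² + q² = 1` and `ε = ±1`, and then `tr (Qᵀ C)` is the inner product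
of `(p, q)` with a vector of squared length `tr CCᵀ + 2ε det C`; by Cauchy–Schwarz its maximum is
`√(tr CCᵀ + 2 |det C|)`, reached for `ε = sign (det C)`.
-/

open Matrix

/-- The Frobenius norm of a real matrix. -/
noncomputable def frobNorm {m n : ℕ} (A : Matrix (Fin m) (Fin n) ℝ) : ℝ :=
  Real.sqrt (Matrix.trace (Aᵀ * A))

open scoped ComplexOrder in
/-- The positive semidefinite square root of a positive semidefinite matrix
(removed from Mathlib; restored with its old definition). -/
noncomputable def Matrix.PosSemidef.sqrt {n : Type*} [Fintype n] [DecidableEq n]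
    {𝕜 : Type*} [RCLike 𝕜] {A : Matrix n n 𝕜} (hA : A.PosSemidef) : Matrix n n 𝕜 :=
  (hA.1.eigenvectorUnitary : Matrix n n 𝕜) * diagonal ((↑) ∘ (√·) ∘ hA.1.eigenvalues) *
    (star hA.1.eigenvectorUnitary : Matrix n n 𝕜)

theorem mul_add_mul_le_sqrt_sq_add_sq {p q : ℝ} (hpq : p ^ 2 + q ^ 2 = 1) (x y : ℝ) :
    p * x + q * y ≤ √(x ^ 2 + y ^ 2) :=
  Real.le_sqrt_of_sq_le (by nlinarith [sq_nonneg (p * y - q * x)])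

theorem exists_mul_add_mul_eq_sqrt_sq_add_sq (x y : ℝ) :
    ∃ p q : ℝ, p ^ 2 + q ^ 2 = 1 ∧ p * x + q * y = √(x ^ 2 + y ^ 2) := by
  have hr : √(x ^ 2 + y ^ 2) ^ 2 = x ^ 2 + y ^ 2 := Real.sq_sqrt (by positivity)
  rcases eq_or_ne √(x ^ 2 + y ^ 2) 0 with h | h
  · have hx : x = 0 := by nlinarith [sq_nonneg y]
    exact ⟨1, 0, by norm_num, by rw [h, hx]; ring⟩
  · refine ⟨x / √(x ^ 2 + y ^ 2), y / √(x ^ 2 + y ^ 2), ?_, ?_⟩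
    · field_simp
      exact hr.symm
    · field_simp
      linear_combination hr.symm

theorem frobNorm_sq {m n : ℕ} (X : Matrix (Fin m) (Fin n) ℝ) :
    frobNorm X ^ 2 = (Xᵀ * X).trace := by
  refine Real.sq_sqrt (PosSemidef.trace_nonneg ?_)
  simpa using posSemidef_conjTranspose_mul_self X

theorem frobNorm_mul_sub_sq {m n : ℕ} (F G : Matrix (Fin m) (Fin n) ℝ)
    {Q : Matrix (Fin n) (Fin n) ℝ} (hQ : Qᵀ * Q = 1) :
    frobNorm (G * Q - F) ^ 2
      = (F * Fᵀ).trace + (G * Gᵀ).trace - 2 * (Qᵀ * (Gᵀ * F)).trace := by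
  have hQ' : Q * Qᵀ = 1 := mul_eq_one_comm.mp hQ
  have hGG : (Qᵀ * Gᵀ * (G * Q)).trace = (G * Gᵀ).trace := by
    rw [trace_mul_comm, Matrix.mul_assoc, ← Matrix.mul_assoc Q, hQ', Matrix.one_mul]
  have hFG : (Fᵀ * (G * Q)).trace = (Qᵀ * (Gᵀ * F)).trace := by
    rw [← trace_transpose]
    simp only [transpose_mul, transpose_transpose, Matrix.mul_assoc]
  rw [frobNorm_sq, transpose_sub, transpose_mul, Matrix.sub_mul, Matrix.mul_sub, Matrix.mul_sub,
    trace_sub, trace_sub, trace_sub, hGG, hFG, Matrix.mul_assoc, trace_mul_comm Fᵀ]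
  ring

namespace Matrix

open Polynomial in
theorem sum_map_roots_charpoly_mul_comm {K M : Type*} [Field K] [AddCommMonoid M]
    {m n : Type*} [Fintype m] [Fintype n] [DecidableEq m] [DecidableEq n]
    (A : Matrix m n K) (B : Matrix n m K) {f : K → M} (hf : f 0 = 0) :
    ((A * B).charpoly.roots.map f).sum = ((B * A).charpoly.roots.map f).sum := by
  have h := congrArg (fun p : K[X] => (p.roots.map f).sum) (charpoly_mul_comm' A B)
  simpa only [roots_mul ((monic_X_pow _).mul (charpoly_monic _)).ne_zero, roots_X_pow,
    Multiset.map_add, Multiset.sum_add, Multiset.map_nsmul, Multiset.sum_nsmul,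
    Multiset.map_singleton, Multiset.sum_singleton, hf, smul_zero, zero_add] using h

open scoped ComplexOrder in
theorem PosSemidef.trace_sqrt {n 𝕜 : Type*} [Fintype n] [DecidableEq n] [RCLike 𝕜]
    {A : Matrix n n 𝕜} (hA : A.PosSemidef) :
    hA.sqrt.trace = ∑ i, (√(hA.1.eigenvalues i) : 𝕜) := by
  rw [PosSemidef.sqrt, trace_mul_comm, ← Matrix.mul_assoc, Unitary.coe_star_mul_self,
    Matrix.one_mul, trace_diagonal]
  rfl

theorem PosSemidef.trace_sqrt_eq_sum_roots {n : Type*} [Fintype n] [DecidableEq n]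
    {A : Matrix n n ℝ} (hA : A.PosSemidef) :
    hA.sqrt.trace = (A.charpoly.roots.map (√·)).sum := by
  rw [hA.trace_sqrt, hA.1.roots_charpoly_eq_eigenvalues, Multiset.map_map]
  rfl

open scoped MatrixOrder in
theorem PosSemidef.sqrt_mul_self {n : Type*} [Fintype n] [DecidableEq n]
    {A : Matrix n n ℝ} (hA : A.PosSemidef) : hA.sqrt * hA.sqrt = A := by
  have hsqrt : hA.sqrt = CFC.sqrt A := by
    rw [CFC.sqrt_eq_real_sqrt A hA.nonneg, cfcₙ_eq_cfc, hA.1.cfc_eq]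
    rfl
  rw [hsqrt]
  exact CFC.sqrt_mul_sqrt_self A hA.nonneg

theorem PosSemidef.trace_sqrt_fin_two {N : Matrix (Fin 2) (Fin 2) ℝ} (hN : N.PosSemidef) :
    hN.sqrt.trace = √(N.trace + 2 * √N.det) := by
  rw [hN.trace_sqrt, hN.1.trace_eq_sum_eigenvalues, hN.1.det_eq_prod_eigenvalues]
  simp only [Fin.sum_univ_two, Fin.prod_univ_two, RCLike.ofReal_real_eq_id, id]
  have ha := hN.eigenvalues_nonneg 0
  have hb := hN.eigenvalues_nonneg 1
  rw [Real.sqrt_mul ha, eq_comm, Real.sqrt_eq_iff_eq_sq (by positivity) (by positivity)]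
  linear_combination (Real.sq_sqrt ha).symm + (Real.sq_sqrt hb).symm

theorem exists_eq_of_transpose_mul_self_eq_one_fin_two {Q : Matrix (Fin 2) (Fin 2) ℝ}
    (hQ : Qᵀ * Q = 1) :
    ∃ ε p q : ℝ, ε ^ 2 = 1 ∧ p ^ 2 + q ^ 2 = 1 ∧ Q = !![p, -(ε * q); q, ε * p] := by
  have hentry (i j : Fin 2) := congrFun (congrFun hQ i) j
  simp only [mul_apply, Fin.sum_univ_two, transpose_apply, one_apply] at hentry
  have h1 : Q 0 0 ^ 2 + Q 1 0 ^ 2 = 1 := by simpa [sq] using hentry 0 0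
  have h2 : Q 0 0 * Q 0 1 + Q 1 0 * Q 1 1 = 0 := by simpa using hentry 0 1
  have h3 : Q 0 1 ^ 2 + Q 1 1 ^ 2 = 1 := by simpa [sq] using hentry 1 1
  refine ⟨Q.det, Q 0 0, Q 1 0, ?_, h1, ?_⟩
  · rw [det_fin_two]
    linear_combination (Q 0 1 ^ 2 + Q 1 1 ^ 2) * h1
      - (Q 0 0 * Q 0 1 + Q 1 0 * Q 1 1) * h2 + h3
  · ext i j
    fin_cases i <;> fin_cases j <;>
      simp only [Fin.zero_eta, Fin.isValue, Fin.mk_one, det_fin_two, of_apply, cons_val',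
        cons_val_zero, cons_val_one, cons_val_fin_one]
    · linear_combination (-Q 0 1) * h1 + Q 0 0 * h2
    · linear_combination (-Q 1 1) * h1 + Q 1 0 * h2

theorem transpose_mul_self_eq_one_fin_two {ε p q : ℝ} (hε : ε ^ 2 = 1) (hpq : p ^ 2 + q ^ 2 = 1) :
    (!![p, -(ε * q); q, ε * p])ᵀ * !![p, -(ε * q); q, ε * p] = 1 := by
  ext i j
  fin_cases i <;> fin_cases j <;>
    simp only [Fin.zero_eta, Fin.isValue, Fin.mk_one, mul_apply, transpose_apply, of_apply,
      cons_val', cons_val_zero, cons_val_one, cons_val_fin_one, Fin.sum_univ_two, one_apply_eq,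
      one_apply_ne, ne_eq, zero_ne_one, one_ne_zero, not_false_eq_true]
  · linear_combination hpq
  · ring
  · ring
  · linear_combination (p ^ 2 + q ^ 2) * hε + hpq

theorem trace_transpose_mul_fin_two (ε p q : ℝ) (C : Matrix (Fin 2) (Fin 2) ℝ) :
    ((!![p, -(ε * q); q, ε * p])ᵀ * C).trace
      = p * (C 0 0 + ε * C 1 1) + q * (C 1 0 - ε * C 0 1) := by
  simp only [trace_fin_two, Fin.isValue, mul_apply, transpose_apply, of_apply, cons_val',
    cons_val_zero, cons_val_one, cons_val_fin_one, Fin.sum_univ_two]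
  ring

theorem isGreatest_trace_transpose_mul_fin_two (C : Matrix (Fin 2) (Fin 2) ℝ) :
    IsGreatest {t | ∃ Q : Matrix (Fin 2) (Fin 2) ℝ, Qᵀ * Q = 1 ∧ t = (Qᵀ * C).trace}
      √((C * Cᵀ).trace + 2 * |C.det|) := by
  have hsq {ε : ℝ} (hε : ε ^ 2 = 1) : (C 0 0 + ε * C 1 1) ^ 2 + (C 1 0 - ε * C 0 1) ^ 2
      = (C * Cᵀ).trace + 2 * (ε * C.det) := by
    simp only [trace_fin_two, mul_apply, Fin.sum_univ_two, transpose_apply, det_fin_two]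
    linear_combination (C 1 1 ^ 2 + C 0 1 ^ 2) * hε
  constructor
  · obtain ⟨ε, hε, hεdet⟩ : ∃ ε : ℝ, ε ^ 2 = 1 ∧ ε * C.det = |C.det| := by
      rcases le_total 0 C.det with h | h
      · exact ⟨1, by norm_num, by rw [one_mul, abs_of_nonneg h]⟩
      · exact ⟨-1, by norm_num, by rw [neg_one_mul, abs_of_nonpos h]⟩
    obtain ⟨p, q, hpq, hmax⟩ :=
      exists_mul_add_mul_eq_sqrt_sq_add_sq (C 0 0 + ε * C 1 1) (C 1 0 - ε * C 0 1)
    exact ⟨_, transpose_mul_self_eq_one_fin_two hε hpq,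
      by rw [trace_transpose_mul_fin_two, hmax, hsq hε, hεdet]⟩
  · rintro t ⟨Q, hQ, rfl⟩
    obtain ⟨ε, p, q, hε, hpq, rfl⟩ := exists_eq_of_transpose_mul_self_eq_one_fin_two hQ
    have hεabs : |ε| = 1 := by rw [← Real.sqrt_sq_eq_abs, hε, Real.sqrt_one]
    rw [trace_transpose_mul_fin_two]
    calc _ ≤ √((C 0 0 + ε * C 1 1) ^ 2 + (C 1 0 - ε * C 0 1) ^ 2) :=
          mul_add_mul_le_sqrt_sq_add_sq hpq _ _
      _ ≤ _ := by
        rw [hsq hε]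
        gcongr
        calc ε * C.det ≤ |ε * C.det| := le_abs_self _
          _ = |C.det| := by rw [abs_mul, hεabs, one_mul]

end Matrix

theorem stmt12_general (m : ℕ) (Fi Fj : Matrix (Fin m) (Fin 2) ℝ)
    (hGi : (Fi * Fiᵀ).PosSemidef)
    (hMid : (hGi.sqrt * (Fj * Fjᵀ) * hGi.sqrt).PosSemidef) :
    Matrix.trace (Fi * Fiᵀ) + Matrix.trace (Fj * Fjᵀ)
        - 2 * Matrix.trace hMid.sqrt
      = sInf {x : ℝ | ∃ Q : Matrix (Fin 2) (Fin 2) ℝ,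
          Qᵀ * Q = 1 ∧ x = (frobNorm (Fj * Q - Fi)) ^ 2} := by
  set C := Fjᵀ * Fi
  have hCC : (C * Cᵀ).PosSemidef := by simpa using posSemidef_self_mul_conjTranspose C
  have htrace : hMid.sqrt.trace = √((C * Cᵀ).trace + 2 * |C.det|) := by
    have hmid : hGi.sqrt * (Fj * Fjᵀ) * hGi.sqrt = hGi.sqrt * Fj * (Fjᵀ * hGi.sqrt) := by
      simp only [Matrix.mul_assoc]
    have hswap : Fjᵀ * hGi.sqrt * (hGi.sqrt * Fj) = C * Cᵀ := by
      simp only [C, transpose_mul, transpose_transpose, Matrix.mul_assoc]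
      rw [← Matrix.mul_assoc hGi.sqrt, hGi.sqrt_mul_self, Matrix.mul_assoc]
    rw [hMid.trace_sqrt_eq_sum_roots, hmid, sum_map_roots_charpoly_mul_comm _ _ Real.sqrt_zero,
      hswap, ← hCC.trace_sqrt_eq_sum_roots, hCC.trace_sqrt_fin_two, det_mul, det_transpose,
      Real.sqrt_mul_self_eq_abs]
  obtain ⟨⟨Q₀, hQ₀, hQ₀C⟩, hle⟩ := isGreatest_trace_transpose_mul_fin_two C
  symm
  refine IsLeast.csInf_eq ⟨⟨Q₀, hQ₀, ?_⟩, ?_⟩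
  · rw [frobNorm_mul_sub_sq Fi Fj hQ₀, htrace, hQ₀C]
  · rintro x ⟨Q, hQ, rfl⟩
    rw [frobNorm_mul_sub_sq Fi Fj hQ, htrace]
    linarith [hle ⟨Q, hQ, rfl⟩]

/-- The trace-based expression
`tr(G_i) + tr(G_j) − 2 tr((G_i^{1/2} G_j G_i^{1/2})^{1/2})` for the squared
distance between Gram matrices coincides with the Procrustes-type expression
`min_{Q ∈ O(2)} ‖F_j Q − F_i‖_F²`. -/
theorem stmt12 (m : ℕ) (hm : 1 ≤ m) (Fi Fj : Matrix (Fin m) (Fin 2) ℝ)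
    (hGi : (Fi * Fiᵀ).PosSemidef)
    (hMid : (hGi.sqrt * (Fj * Fjᵀ) * hGi.sqrt).PosSemidef) :
    Matrix.trace (Fi * Fiᵀ) + Matrix.trace (Fj * Fjᵀ)
        - 2 * Matrix.trace hMid.sqrt
      = sInf {x : ℝ | ∃ Q : Matrix (Fin 2) (Fin 2) ℝ,
          Qᵀ * Q = 1 ∧ x = (frobNorm (Fj * Q - Fi)) ^ 2} :=
  stmt12_general m Fi Fj hGi hMid
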